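/- arXiv:1805.10932 — 2 statements merged into one kernel-verified Lean document; each statement's English description precedes it below -/
import Mathlib

section
/- Let μ be a finite nonzero Borel measure on ℂ whose support is contained in a compact set I of diameter d > 0, let ξ₀ ∈ I, and let q ≥ 1 be an integer. Then there exist complex numbers r₁, …, r_q with |r_l| ≤ 2 q d for every l, such that for every u = 1, …, q: ∑_{l=1}^q r_l^u = (q / μ(I)) ∫_I (ξ − ξ₀)^u dμ(ξ). -/
/-!
Newton's identities turn prescribed power sums `p₁, …, p_q` into prescribed elementary symmetric
values `e₁, …, e_q`, and the roots of `X^q - e₁ X^(q-1) + ⋯ + (-1)^q e_q` then have exactly these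
power sums. The normalized moments satisfy `|p_u| ≤ q d^u`, which propagates through the
recursion to `|e_k| ≤ (q d)^k`; a root `x` with `|x| > 2 q d` is then impossible, because
`|x|^q ≤ ∑_{k ≥ 1} (q d)^k |x|^(q-k) < ∑_{k ≥ 1} 2^(-k) |x|^q < |x|^q`.
-/

open MeasureTheory Finset

theorem Finset.sum_antidiagonal_filter_fst_lt {M : Type*} [AddCommMonoid M] (f : ℕ → ℕ → M)
    (k : ℕ) :
    ∑ a ∈ antidiagonal k with a.1 < k, f a.1 a.2 = ∑ a ∈ range k, f a (k - a) := by
  rw [sum_filter, Nat.sum_antidiagonal_eq_sum_range_succ (fun i j => if i < k then f i j else 0),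
    sum_range_succ, if_neg (lt_irrefl k), add_zero]
  exact sum_congr rfl fun a ha => if_pos (mem_range.1 ha)

section Newton

variable {K : Type*}

theorem natCast_mul_esymm_map_eq_sum [CommRing K] {σ : Type*} [Fintype σ] (r : σ → K) (k : ℕ) :
    (k : K) * (univ.val.map r).esymm k = (-1) ^ (k + 1) *
      ∑ a ∈ range k, (-1) ^ a * (univ.val.map r).esymm a * ∑ l, r l ^ (k - a) := by
  have h := congrArg (MvPolynomial.aeval r) (MvPolynomial.mul_esymm_eq_sum σ K k)
  simp only [map_mul, map_sum, map_pow, map_natCast, map_neg, map_one,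
    MvPolynomial.aeval_esymm_eq_multiset_esymm, MvPolynomial.psum, MvPolynomial.aeval_X] at h
  rw [h, sum_antidiagonal_filter_fst_lt
    (fun a b => (-1) ^ a * (univ.val.map r).esymm a * ∑ l, r l ^ b)]

theorem eq_of_newton_identities [CommRing K] {e P p : ℕ → K} {n : ℕ} (he : e 0 = 1)
    (hP : ∀ k, 1 ≤ k → k ≤ n →
      (k : K) * e k = (-1) ^ (k + 1) * ∑ a ∈ range k, (-1) ^ a * e a * P (k - a))
    (hp : ∀ k, 1 ≤ k → k ≤ n →
      (k : K) * e k = (-1) ^ (k + 1) * ∑ a ∈ range k, (-1) ^ a * e a * p (k - a)) :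
    ∀ k, 1 ≤ k → k ≤ n → P k = p k := by
  intro k
  induction k using Nat.strong_induction_on with
  | _ k ih =>
    intro hk hkn
    have hdiff : ∑ a ∈ range k, (-1) ^ a * e a * (P (k - a) - p (k - a)) = P k - p k := by
      rw [sum_eq_single_of_mem 0 (mem_range.2 hk), pow_zero, he, one_mul, one_mul, Nat.sub_zero]
      intro a ha ha0
      rw [mem_range] at ha
      rw [ih (k - a) (by omega) (by omega) (by omega), sub_self, mul_zero]
    have hsum := (isUnit_neg_one.pow (k + 1)).mul_left_cancel
      ((hP k hk hkn).symm.trans (hp k hk hkn))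
    rw [← sub_eq_zero, ← hdiff]
    simp only [mul_sub, sum_sub_distrib, hsum, sub_self]

/-- Newton's identities solved for `e (k + 1)`. -/
noncomputable def esymmOfPsum [Field K] (p : ℕ → K) : ℕ → K
  | 0 => 1
  | k + 1 => (-1) ^ k / (k + 1) *
      ∑ a : Fin (k + 1), (-1) ^ (a : ℕ) * esymmOfPsum p a * p (k + 1 - a)

@[simp]
theorem esymmOfPsum_zero [Field K] (p : ℕ → K) : esymmOfPsum p 0 = 1 := by
  rw [esymmOfPsum]

theorem natCast_mul_esymmOfPsum [Field K] [CharZero K] (p : ℕ → K) (k : ℕ) :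
    (k : K) * esymmOfPsum p k =
      (-1) ^ (k + 1) * ∑ a ∈ range k, (-1) ^ a * esymmOfPsum p a * p (k - a) := by
  cases k with
  | zero => simp
  | succ k =>
    rw [esymmOfPsum,
      Fin.sum_univ_eq_sum_range (fun a => (-1) ^ a * esymmOfPsum p a * p (k + 1 - a))]
    have : (k + 1 : K) ≠ 0 := by exact_mod_cast k.succ_ne_zero
    push_cast
    field_simp
    ring

theorem norm_esymmOfPsum_le {𝕜 : Type*} [RCLike 𝕜] {p : ℕ → 𝕜} {q : ℕ} {D : ℝ} (hD : 0 ≤ D)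
    (hp : ∀ u, 1 ≤ u → u ≤ q → ‖p u‖ ≤ q * D ^ u) :
    ∀ k ≤ q, ‖esymmOfPsum p k‖ ≤ (q * D) ^ k := by
  intro k
  induction k using Nat.strong_induction_on with
  | _ k ih =>
    intro hkq
    rcases k.eq_zero_or_pos with rfl | hk
    · simp
    have hq : (1 : ℝ) ≤ q := by exact_mod_cast hk.trans_le hkq
    have hterm : ∀ a ∈ range k, ‖(-1) ^ a * esymmOfPsum p a * p (k - a)‖ ≤ (q * D) ^ k := by
      intro a ha
      have hak := mem_range.1 ha
      have hDk : D ^ k = D ^ a * D ^ (k - a) := by rw [← pow_add, Nat.add_sub_cancel' hak.le]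
      calc ‖(-1) ^ a * esymmOfPsum p a * p (k - a)‖
          = ‖esymmOfPsum p a‖ * ‖p (k - a)‖ := by
            rw [norm_mul, norm_mul, norm_pow, norm_neg, norm_one, one_pow, one_mul]
        _ ≤ (q * D) ^ a * (q * D ^ (k - a)) := by
            gcongr
            · exact ih a hak (by omega)
            · exact hp _ (by omega) (by omega)
        _ = q ^ (a + 1) * D ^ k := by rw [hDk]; ring
        _ ≤ (q * D) ^ k := by rw [mul_pow]; gcongr; omega
    have hmul : (k : ℝ) * ‖esymmOfPsum p k‖ ≤ k * (q * D) ^ k :=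
      calc (k : ℝ) * ‖esymmOfPsum p k‖ = ‖(k : 𝕜) * esymmOfPsum p k‖ := by
            rw [norm_mul, RCLike.norm_natCast]
        _ = ‖∑ a ∈ range k, (-1) ^ a * esymmOfPsum p a * p (k - a)‖ := by
            rw [natCast_mul_esymmOfPsum, norm_mul, norm_pow, norm_neg, norm_one, one_pow, one_mul]
        _ ≤ k * (q * D) ^ k := by
            simpa using norm_sum_le_of_le (range k) hterm
    exact le_of_mul_le_mul_left hmul (by exact_mod_cast hk)

end Newton

theorem Multiset.exists_fin_univ_map_eq {α : Type*} {n : ℕ} (s : Multiset α) (hs : card s = n) :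
    ∃ r : Fin n → α, univ.val.map r = s := by
  subst hs
  induction s using Quotient.inductionOn with
  | h l => exact ⟨l.get, (Fin.univ_val_map l.get).trans (congrArg _ l.ofFn_get)⟩

namespace Polynomial

theorem exists_monic_natDegree_coeff_eq {R : Type*} [CommRing R] [Nontrivial R] (n : ℕ)
    (c : ℕ → R) : ∃ f : R[X], f.Monic ∧ f.natDegree = n ∧ ∀ j < n, f.coeff j = c j := by
  classical
  have hlow : (ofFn n fun i : Fin n => c i).degree < n := ofFn_degree_lt _
  refine ⟨X ^ n + ofFn n fun i => c i, monic_X_pow_add hlow, ?_, fun j hj => ?_⟩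
  · rw [natDegree_add_eq_left_of_degree_lt (by rwa [degree_X_pow]), natDegree_X_pow]
  · rw [coeff_add, coeff_X_pow, if_neg hj.ne, ofFn_coeff_eq_val_of_lt _ hj, zero_add]

theorem norm_le_two_mul_of_isRoot {K : Type*} [NormedField K] {f : K[X]} (hf : f.Monic)
    {R : ℝ} (hR : 0 ≤ R) (hcoeff : ∀ j < f.natDegree, ‖f.coeff j‖ ≤ R ^ (f.natDegree - j))
    {x : K} (hx : f.IsRoot x) : ‖x‖ ≤ 2 * R := by
  set n := f.natDegree
  by_contra! hlt
  obtain ⟨s, hxs⟩ : ∃ s, ‖x‖ = 2 * s := ⟨‖x‖ / 2, by ring⟩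
  have hRs : R ≤ s := by linarith
  have hs : 0 < s := by linarith
  have hroot : x ^ n = -∑ j ∈ range n, f.coeff j * x ^ j := by
    have h := hx.eq_zero
    rw [eval_eq_sum_range, sum_range_succ, hf.coeff_natDegree, one_mul] at h
    exact eq_neg_of_add_eq_zero_right h
  have hgeom : ∑ j ∈ range n, (2 : ℝ) ^ j = 2 ^ n - 1 := by
    have h := geom_sum_mul (2 : ℝ) n
    norm_num at h
    exact h
  have hbound : (2 * s) ^ n ≤ (2 ^ n - 1) * s ^ n :=
    calc (2 * s) ^ n = ‖∑ j ∈ range n, f.coeff j * x ^ j‖ := by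
          rw [← hxs, ← norm_pow, hroot, norm_neg]
      _ ≤ ∑ j ∈ range n, s ^ (n - j) * (2 * s) ^ j := by
          refine norm_sum_le_of_le _ fun j hj => ?_
          rw [norm_mul, norm_pow, hxs]
          gcongr
          exact (hcoeff j (mem_range.1 hj)).trans (by gcongr)
      _ = ∑ j ∈ range n, 2 ^ j * s ^ n := by
          refine sum_congr rfl fun j hj => ?_
          rw [mul_pow, ← Nat.sub_add_cancel (mem_range.1 hj).le, pow_add]
          simp only [Nat.add_sub_cancel]
          ring
      _ = (2 ^ n - 1) * s ^ n := by rw [← sum_mul, hgeom]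
  have : 0 < s ^ n := by positivity
  rw [mul_pow] at hbound
  linarith

end Polynomial

theorem exists_esymm_eq_of_norm_le {K : Type*} [NormedField K] [IsAlgClosed K] (n : ℕ)
    (e : ℕ → K) {R : ℝ} (hR : 0 ≤ R) (he : ∀ k, 1 ≤ k → k ≤ n → ‖e k‖ ≤ R ^ k) :
    ∃ r : Fin n → K, (∀ l, ‖r l‖ ≤ 2 * R) ∧
      ∀ k, 1 ≤ k → k ≤ n → (univ.val.map r).esymm k = e k := by
  obtain ⟨f, hmonic, hdeg, hcoeff⟩ :=
    Polynomial.exists_monic_natDegree_coeff_eq n fun j => (-1) ^ (n - j) * e (n - j)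
  have hsplits : f.Splits := IsAlgClosed.splits f
  obtain ⟨r, hr⟩ := f.roots.exists_fin_univ_map_eq
    (by rw [Polynomial.splits_iff_card_roots.1 hsplits, hdeg])
  have hvieta : ∀ j < n, (-1) ^ (n - j) * f.roots.esymm (n - j) = (-1) ^ (n - j) * e (n - j) := by
    intro j hj
    rw [← hcoeff j hj, Polynomial.coeff_eq_esymm_roots_of_splits hsplits (by omega),
      hmonic.leadingCoeff, one_mul, hdeg]
  refine ⟨r, fun l => ?_, fun k hk hkn => ?_⟩
  · refine Polynomial.norm_le_two_mul_of_isRoot hmonic hR (fun j hj => ?_)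
      (Polynomial.isRoot_of_mem_roots (hr ▸ Multiset.mem_map_of_mem r (mem_univ l)))
    rw [hdeg] at hj ⊢
    rw [hcoeff j hj, norm_mul, norm_pow, norm_neg, norm_one, one_pow, one_mul]
    exact he _ (by omega) (by omega)
  · have h := hvieta (n - k) (by omega)
    rw [Nat.sub_sub_self hkn] at h
    rw [hr]
    exact (isUnit_neg_one.pow k).mul_left_cancel h

theorem exists_psum_eq_of_norm_le {q : ℕ} {D : ℝ} (hD : 0 ≤ D) (p : ℕ → ℂ)
    (hp : ∀ u, 1 ≤ u → u ≤ q → ‖p u‖ ≤ q * D ^ u) :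
    ∃ r : Fin q → ℂ, (∀ l, ‖r l‖ ≤ 2 * q * D) ∧ ∀ u, 1 ≤ u → u ≤ q → ∑ l, r l ^ u = p u := by
  obtain ⟨r, hr_norm, hr_esymm⟩ := exists_esymm_eq_of_norm_le q (esymmOfPsum p) (by positivity)
    fun k _ hk => norm_esymmOfPsum_le hD hp k hk
  have hesymm : ∀ a ≤ q, (univ.val.map r).esymm a = esymmOfPsum p a := by
    intro a ha
    rcases a.eq_zero_or_pos with rfl | ha0
    · simp [Multiset.esymm]
    · exact hr_esymm a ha0 ha
  refine ⟨r, fun l => by simpa [mul_assoc] using hr_norm l,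
    eq_of_newton_identities (esymmOfPsum_zero p) (fun k _ hk => ?_)
      fun k _ _ => natCast_mul_esymmOfPsum p k⟩
  rw [← hesymm k hk, natCast_mul_esymm_map_eq_sum r k]
  exact congrArg _ (sum_congr rfl fun a ha => by rw [hesymm a (by linarith [mem_range.1 ha])])

theorem norm_setAverage_le_of_norm_le {α E : Type*} [MeasurableSpace α] [NormedAddCommGroup E]
    [NormedSpace ℝ E] {μ : Measure α} [IsFiniteMeasure μ] {s : Set α} {f : α → E} {C : ℝ}
    (hC : 0 ≤ C) (hf : ∀ x ∈ s, ‖f x‖ ≤ C) : ‖⨍ x in s, f x ∂μ‖ ≤ C := by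
  rw [setAverage_eq, norm_smul, norm_inv, Real.norm_of_nonneg measureReal_nonneg]
  calc (μ.real s)⁻¹ * ‖∫ x in s, f x ∂μ‖ ≤ (μ.real s)⁻¹ * (C * μ.real s) := by
        gcongr
        exact norm_setIntegral_le_of_norm_le_const (measure_lt_top μ s) hf
    _ ≤ C := by
        rcases measureReal_nonneg.eq_or_lt with h | h
        · rw [← h, inv_zero, zero_mul]
          exact hC
        · rw [mul_comm C, ← mul_assoc, inv_mul_cancel₀ h.ne', one_mul]

theorem exists_points_matching_moments_general
    (μ : Measure ℂ) [IsFiniteMeasure μ]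
    (I : Set ℂ) (hI : IsCompact I)
    (d : ℝ) (hd : d = Metric.diam I)
    (ξ₀ : ℂ) (hξ₀ : ξ₀ ∈ I) (q : ℕ) :
    ∃ r : Fin q → ℂ,
      (∀ l, ‖r l‖ ≤ 2 * q * d) ∧
      ∀ u : ℕ, 1 ≤ u → u ≤ q →
        ∑ l, r l ^ u =
          ((q : ℂ) / ((μ I).toReal : ℂ)) * ∫ ξ in I, (ξ - ξ₀) ^ u ∂μ := by
  have hd0 : 0 ≤ d := hd ▸ Metric.diam_nonneg
  have hmoment : ∀ u : ℕ, ((q : ℂ) / ((μ I).toReal : ℂ)) * ∫ ξ in I, (ξ - ξ₀) ^ u ∂μ =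
      q * ⨍ ξ in I, (ξ - ξ₀) ^ u ∂μ := by
    intro u
    rw [setAverage_eq, Complex.real_smul, measureReal_def]
    push_cast
    ring
  refine exists_psum_eq_of_norm_le hd0 _ fun u _ _ => ?_
  rw [hmoment, norm_mul, Complex.norm_natCast]
  gcongr
  refine norm_setAverage_le_of_norm_le (by positivity) fun ξ hξ => ?_
  rw [norm_pow, ← dist_eq_norm, hd]
  gcongr
  exact Metric.dist_le_diam_of_mem hI.isBounded hξ hξ₀

/-- Given a finite nonzero Borel measure `μ` supported in a compact set `I` of
diameter `d > 0`, a base point `ξ₀ ∈ I` and an integer `q ≥ 1`, there are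
complex numbers `r 1, …, r q` of modulus at most `2 q d` whose first `q` power
sums equal the normalized moments `(q / μ(I)) ∫_I (ξ − ξ₀)^u dμ(ξ)`. -/
theorem exists_points_matching_moments
    (μ : Measure ℂ) [IsFiniteMeasure μ] (hμ : μ ≠ 0)
    (I : Set ℂ) (hI : IsCompact I) (hsupp : μ Iᶜ = 0)
    (hμI : 0 < μ I)
    (d : ℝ) (hd : d = Metric.diam I) (hd0 : 0 < d)
    (ξ₀ : ℂ) (hξ₀ : ξ₀ ∈ I) (q : ℕ) (hq : 1 ≤ q) :
    ∃ r : Fin q → ℂ,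
      (∀ l, ‖r l‖ ≤ 2 * q * d) ∧
      ∀ u : ℕ, 1 ≤ u → u ≤ q →
        ∑ l, r l ^ u =
          ((q : ℂ) / ((μ I).toReal : ℂ)) * ∫ ξ in I, (ξ - ξ₀) ^ u ∂μ :=
  exists_points_matching_moments_general μ I hI d hd ξ₀ hξ₀ q
end

section
/- Let q ≥ 1 be an integer, d > 0, and let m̃₁, …, m̃_q ∈ ℂ satisfy |m̃_u| ≤ q d^u for u = 1, …, q. Suppose a₀, …, a_{q−1} ∈ ℂ satisfy Newton's identities m̃_u + a_{q−1} m̃_{u−1} + ⋯ + a_{q−u+1} m̃₁ = −u a_{q−u} for u = 1, …, q. Then |a_{q−u}| ≤ q^u d^u for every u = 1, …, q. -/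
/-!
Strong induction on `u`. Newton's identity gives
`u ‖a (q-u)‖ ≤ ‖m̃ u‖ + ∑_{i=1}^{u-1} ‖a (q-i)‖ ‖m̃ (u-i)‖`, and under the inductive hypothesis
the first term and each of the `u - 1` summands (`≤ q^i d^i · q d^(u-i) = q^(i+1) d^u`) are at
most `q^u d^u`, since `q ≥ 1`.
-/

open Finset

section NewtonIdentities

variable {𝕜 : Type*} [RCLike 𝕜] {p b : ℕ → 𝕜} {u : ℕ}

theorem natCast_mul_norm_le_of_newton_identity
    (h : p u + ∑ i ∈ Icc 1 (u - 1), b i * p (u - i) = -(u : 𝕜) * b u) :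
    (u : ℝ) * ‖b u‖ ≤ ‖p u‖ + ∑ i ∈ Icc 1 (u - 1), ‖b i‖ * ‖p (u - i)‖ := by
  calc (u : ℝ) * ‖b u‖ = ‖p u + ∑ i ∈ Icc 1 (u - 1), b i * p (u - i)‖ := by
        rw [h, norm_mul, norm_neg, RCLike.norm_natCast]
    _ ≤ ‖p u‖ + ‖∑ i ∈ Icc 1 (u - 1), b i * p (u - i)‖ := norm_add_le _ _
    _ ≤ ‖p u‖ + ∑ i ∈ Icc 1 (u - 1), ‖b i‖ * ‖p (u - i)‖ := by
        gcongr
        exact (norm_sum_le _ _).trans_eq (by simp only [norm_mul])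

theorem pow_mul_pow_mul_le_pow_mul_pow {C d x y : ℝ} {i : ℕ} (hC : 1 ≤ C) (hd : 0 ≤ d)
    (hiu : i < u) (hy : 0 ≤ y) (hxC : x ≤ C ^ i * d ^ i) (hyC : y ≤ C * d ^ (u - i)) :
    x * y ≤ C ^ u * d ^ u := by
  calc x * y ≤ C ^ i * d ^ i * (C * d ^ (u - i)) :=
        mul_le_mul hxC hyC hy (by positivity)
    _ = C ^ (i + 1) * d ^ u := by
        rw [pow_succ, ← pow_mul_pow_sub d hiu.le]; ring
    _ ≤ C ^ u * d ^ u := by gcongr; exact hiu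

theorem norm_le_pow_mul_pow_of_newton_identities {N : ℕ} {C d : ℝ} (hC : 1 ≤ C) (hd : 0 ≤ d)
    (hp : ∀ u, 1 ≤ u → u ≤ N → ‖p u‖ ≤ C * d ^ u)
    (hnewton : ∀ u, 1 ≤ u → u ≤ N →
      p u + ∑ i ∈ Icc 1 (u - 1), b i * p (u - i) = -(u : 𝕜) * b u) :
    ∀ u, 1 ≤ u → u ≤ N → ‖b u‖ ≤ C ^ u * d ^ u := by
  intro u
  induction u using Nat.strong_induction_on with
  | _ u ih =>
    intro hu huN
    have hterm : ∀ i ∈ Icc 1 (u - 1), ‖b i‖ * ‖p (u - i)‖ ≤ C ^ u * d ^ u := by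
      intro i hi
      obtain ⟨hi1, hiu⟩ := mem_Icc.mp hi
      exact pow_mul_pow_mul_le_pow_mul_pow hC hd (by omega) (norm_nonneg _)
        (ih i (by omega) hi1 (by omega)) (hp (u - i) (by omega) (by omega))
    have hfirst : ‖p u‖ ≤ C ^ u * d ^ u :=
      (hp u hu huN).trans (by gcongr; exact le_self_pow₀ hC (by omega))
    refine le_of_mul_le_mul_left ?_ (by exact_mod_cast hu : (0 : ℝ) < u)
    calc (u : ℝ) * ‖b u‖ ≤ ‖p u‖ + ∑ i ∈ Icc 1 (u - 1), ‖b i‖ * ‖p (u - i)‖ :=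
          natCast_mul_norm_le_of_newton_identity (hnewton u hu huN)
      _ ≤ C ^ u * d ^ u + ∑ _i ∈ Icc 1 (u - 1), C ^ u * d ^ u :=
          add_le_add hfirst (sum_le_sum hterm)
      _ = u * (C ^ u * d ^ u) := by
          rw [sum_const, Nat.card_Icc, Nat.add_sub_cancel, nsmul_eq_mul, ← one_add_mul,
            Nat.cast_sub hu, Nat.cast_one, add_sub_cancel]

end NewtonIdentities

/-- Coefficient bounds from Newton's identities: if the "power sums"
`m̃ 1, …, m̃ q` satisfy `|m̃ u| ≤ q d^u` and the coefficients `a 0, …, a (q-1)`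
satisfy Newton's identities
`m̃ u + a (q-1) m̃ (u-1) + ⋯ + a (q-u+1) m̃ 1 = -u a (q-u)` for `u = 1, …, q`,
then `|a (q-u)| ≤ q^u d^u` for every `u = 1, …, q`. -/
theorem newton_coefficient_bound
    (q : ℕ) (hq : 1 ≤ q) (d : ℝ) (hd : 0 < d)
    (mt : ℕ → ℂ) (a : ℕ → ℂ)
    (hmt : ∀ u : ℕ, 1 ≤ u → u ≤ q → ‖mt u‖ ≤ (q : ℝ) * d ^ u)
    (hnewton : ∀ u : ℕ, 1 ≤ u → u ≤ q →
      mt u + ∑ i ∈ Finset.Icc 1 (u - 1), a (q - i) * mt (u - i)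
        = -(u : ℂ) * a (q - u)) :
    ∀ u : ℕ, 1 ≤ u → u ≤ q →
      ‖a (q - u)‖ ≤ (q : ℝ) ^ u * d ^ u :=
  norm_le_pow_mul_pow_of_newton_identities (b := fun i ↦ a (q - i)) (by exact_mod_cast hq)
    hd.le hmt hnewton
end
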